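/- arXiv:1610.06734 — 7 statements merged into one kernel-verified Lean document; each statement's English description precedes it below -/
import Mathlib

section
/- Let f, g be functions with f Lipschitz with constant K1 on a set Y, and suppose: (i) X ⊆ Y, (ii) for every θ in a compact set Θ, x ↦ g(x,θ) defines the constraints X = {x ∈ A : g(x,θ) ≤ 0 for all θ ∈ Θ} and Y = {x ∈ A : g(x,θ) ≤ 0 for all θ in a finite ε-cover Θ_m ⊆ Θ}, (iii) θ ↦ g(x,θ) is Lipschitz with constant K2 uniformly over x ∈ Y, and (iv) for every y ∈ Y \ X there exist θ ∈ Θ and x ∈ X with g(y,θ) ≥ K3⁻¹·‖y−x‖. Then if x* minimizes f over X and y* minimizes f over Y, we have |f(x*) − f(y*)| ≤ K1·K2·K3·ε. -/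
/-- approximation guarantee for a sampled convex program obtained
from an uncertain convex program via an ε-cover of the constraint set. -/
theorem ucp_scp_value_close {d m : ℕ} (K1 K2 K3 ε : ℝ)
    (hK1 : 0 < K1) (hK2 : 0 < K2) (hK3 : 0 < K3) (hε : 0 < ε)
    (A : Set (EuclideanSpace ℝ (Fin d))) (hA : Convex ℝ A)
    (Θ : Set (EuclideanSpace ℝ (Fin m))) (hΘ : IsCompact Θ)
    (Θm : Set (EuclideanSpace ℝ (Fin m))) (hΘm : Θm ⊆ Θ) (hΘmfin : Θm.Finite)
    (hcover : ∀ θ ∈ Θ, ∃ θ' ∈ Θm, ‖θ - θ'‖ ≤ ε)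
    (f : EuclideanSpace ℝ (Fin d) → ℝ)
    (g : EuclideanSpace ℝ (Fin d) → EuclideanSpace ℝ (Fin m) → ℝ)
    (hgconv : ∀ θ ∈ Θ, ConvexOn ℝ A (fun x => g x θ))
    (X Y : Set (EuclideanSpace ℝ (Fin d)))
    (hX : X = {x ∈ A | ∀ θ ∈ Θ, g x θ ≤ 0})
    (hY : Y = {x ∈ A | ∀ θ ∈ Θm, g x θ ≤ 0})
    (hLipf : ∀ x ∈ Y, ∀ y ∈ Y, |f x - f y| ≤ K1 * ‖x - y‖)
    (hLipg : ∀ x ∈ Y, ∀ θ ∈ Θ, ∀ θ' ∈ Θ, |g x θ - g x θ'| ≤ K2 * ‖θ - θ'‖)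
    (hpen : ∀ y ∈ Y \ X, ∃ θ ∈ Θ, ∃ x ∈ X, K3⁻¹ * ‖y - x‖ ≤ g y θ)
    (xs ys : EuclideanSpace ℝ (Fin d))
    (hxs : xs ∈ X ∧ ∀ x ∈ X, f xs ≤ f x)
    (hys : ys ∈ Y ∧ ∀ y ∈ Y, f ys ≤ f y) :
    |f xs - f ys| ≤ K1 * K2 * K3 * ε := by
  have hXY : X ⊆ Y := by
    rw [hX, hY]
    rintro x ⟨hxA, hx⟩
    exact ⟨hxA, fun θ hθ => hx θ (hΘm hθ)⟩
  have h1 : f ys ≤ f xs := hys.2 xs (hXY hxs.1)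
  rw [abs_of_nonneg (by linarith)]
  by_cases hysX : ys ∈ X
  · have := hxs.2 ys hysX
    nlinarith [mul_pos (mul_pos (mul_pos hK1 hK2) hK3) hε]
  · obtain ⟨θ, hθ, x, hxX, hp⟩ := hpen ys ⟨hys.1, hysX⟩
    obtain ⟨θ', hθ', hθθ'⟩ := hcover θ hθ
    have hg' : g ys θ' ≤ 0 := by
      have := hys.1; rw [hY] at this; exact this.2 θ' hθ'
    have hlip := hLipg ys hys.1 θ hθ θ' (hΘm hθ')
    have hgθ : g ys θ ≤ K2 * ε := by
      have h2 : K2 * ‖θ - θ'‖ ≤ K2 * ε := by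
        exact mul_le_mul_of_nonneg_left hθθ' hK2.le
      have := abs_le.mp hlip
      linarith [this.2]
    have hdist : ‖ys - x‖ ≤ K2 * K3 * ε := by
      have : K3⁻¹ * ‖ys - x‖ ≤ K2 * ε := le_trans hp hgθ
      rw [inv_mul_le_iff₀ hK3] at this
      nlinarith
    have hfx : f xs ≤ f x := hxs.2 x hxX
    have hf := hLipf x (hXY hxX) ys hys.1
    have := abs_le.mp hf
    have hn : ‖x - ys‖ = ‖ys - x‖ := norm_sub_rev x ys
    nlinarith [this.1, this.2]
end

section
/- Let σ_S(b) be the optimal social welfare as above, σ_{S,−i}(b_{−i}) the optimal welfare with agent i removed, and define the Clarke pivotal surplus p_S(b) = Σᵢ σ_{S,−i}(b_{−i}) − (n−1)·σ_S(b). Then b ↦ p_S(b) is Lipschitz continuous with Lipschitz constant 2·U(1)·n·√n with respect to the Euclidean norm. -/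
lemma key_bound {n : ℕ} (U : ℝ → ℝ) (hUmono : StrictMonoOn U (Set.Icc 0 1))
    (hU0 : U 0 = 0) (s : Finset (Fin n)) (b b' : Fin n → ℝ) (wb wb' : ℝ)
    (h1 : IsGreatest {w | ∃ a : Fin n → ℝ, (∀ j, 0 ≤ a j) ∧ (∑ j, a j) ≤ 1 ∧
        w = ∑ j ∈ s, b j * U (a j)} wb)
    (h2 : IsGreatest {w | ∃ a : Fin n → ℝ, (∀ j, 0 ≤ a j) ∧ (∑ j, a j) ≤ 1 ∧
        w = ∑ j ∈ s, b' j * U (a j)} wb') :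
    wb - wb' ≤ U 1 * ∑ j, |b j - b' j| := by
  obtain ⟨a, ha0, hasum, heq⟩ := h1.1
  have hmem : (∑ j ∈ s, b' j * U (a j)) ∈ {w | ∃ a : Fin n → ℝ, (∀ j, 0 ≤ a j) ∧ (∑ j, a j) ≤ 1 ∧
        w = ∑ j ∈ s, b' j * U (a j)} := ⟨a, ha0, hasum, rfl⟩
  have hwb' := h2.2 hmem
  have haI : ∀ j, a j ∈ Set.Icc (0:ℝ) 1 := by
    intro j
    refine ⟨ha0 j, le_trans ?_ hasum⟩
    exact Finset.single_le_sum (fun i _ => ha0 i) (Finset.mem_univ j)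
  have hU01 : ∀ j, 0 ≤ U (a j) ∧ U (a j) ≤ U 1 := by
    intro j
    constructor
    · rw [← hU0]
      exact hUmono.monotoneOn (Set.left_mem_Icc.2 zero_le_one) (haI j) (haI j).1
    · exact hUmono.monotoneOn (haI j) (Set.right_mem_Icc.2 zero_le_one) (haI j).2
  calc wb - wb' ≤ ∑ j ∈ s, b j * U (a j) - ∑ j ∈ s, b' j * U (a j) := by
        rw [heq]; linarith
    _ = ∑ j ∈ s, (b j - b' j) * U (a j) := by rw [← Finset.sum_sub_distrib]; exact Finset.sum_congr rfl fun j _ => by ring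
    _ ≤ ∑ j ∈ s, |b j - b' j| * U 1 := by
        refine Finset.sum_le_sum fun j _ => ?_
        calc (b j - b' j) * U (a j) ≤ |b j - b' j| * U (a j) :=
              mul_le_mul_of_nonneg_right (le_abs_self _) (hU01 j).1
          _ ≤ |b j - b' j| * U 1 :=
              mul_le_mul_of_nonneg_left (hU01 j).2 (abs_nonneg _)
    _ ≤ ∑ j, |b j - b' j| * U 1 := by
        refine Finset.sum_le_sum_of_subset_of_nonneg (Finset.subset_univ s) fun j _ _ => ?_
        have h0 : (0:ℝ) ≤ U 1 := by
          rw [← hU0]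
          exact (hUmono.monotoneOn (Set.left_mem_Icc.2 zero_le_one)
            (Set.right_mem_Icc.2 zero_le_one) zero_le_one)
        positivity
    _ = U 1 * ∑ j, |b j - b' j| := by rw [Finset.mul_sum]; exact Finset.sum_congr rfl fun j _ => by ring

/-- the Clarke pivotal surplus p_S is Lipschitz with constant 2·U(1)·n·√n. -/
theorem pS_lipschitz {n : ℕ} (hn : 1 ≤ n) (U : ℝ → ℝ)
    (hUmono : StrictMonoOn U (Set.Icc 0 1))
    (hUconc : StrictConcaveOn ℝ (Set.Icc (0:ℝ) 1) U)
    (hUcont : ContinuousOn U (Set.Icc 0 1))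
    (hU0 : U 0 = 0)
    (σS : EuclideanSpace ℝ (Fin n) → ℝ)
    (hσ : ∀ b : EuclideanSpace ℝ (Fin n), (∀ i, 0 ≤ b i) →
      IsGreatest {w | ∃ a : Fin n → ℝ, (∀ i, 0 ≤ a i) ∧ (∑ i, a i) ≤ 1 ∧
        w = ∑ i, b i * U (a i)} (σS b))
    (σm : Fin n → EuclideanSpace ℝ (Fin n) → ℝ)
    (hσm : ∀ (i : Fin n) (b : EuclideanSpace ℝ (Fin n)), (∀ j, 0 ≤ b j) →
      IsGreatest {w | ∃ a : Fin n → ℝ, (∀ j, 0 ≤ a j) ∧ (∑ j, a j) ≤ 1 ∧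
        w = ∑ j ∈ Finset.univ.erase i, b j * U (a j)} (σm i b))
    (pS : EuclideanSpace ℝ (Fin n) → ℝ)
    (hpS : ∀ b, pS b = ∑ i, σm i b - ((n : ℝ) - 1) * σS b) :
    ∀ b b' : EuclideanSpace ℝ (Fin n), (∀ i, 0 ≤ b i) → (∀ i, 0 ≤ b' i) →
      |pS b - pS b'| ≤ 2 * U 1 * n * Real.sqrt n * ‖b - b'‖ := by
  intro b b' hb hb'
  set S : ℝ := ∑ j, |b j - b' j| with hS
  have hU1 : (0:ℝ) ≤ U 1 := by
    rw [← hU0]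
    exact hUmono.monotoneOn (Set.left_mem_Icc.2 zero_le_one)
      (Set.right_mem_Icc.2 zero_le_one) zero_le_one
  have hS0 : 0 ≤ S := Finset.sum_nonneg fun j _ => abs_nonneg _
  -- |σS b - σS b'| ≤ U 1 * S
  have hσabs : |σS b - σS b'| ≤ U 1 * S := by
    rw [abs_sub_le_iff]
    constructor
    · exact key_bound U hUmono hU0 Finset.univ b b' _ _ (hσ b hb) (hσ b' hb')
    · have := key_bound U hUmono hU0 Finset.univ b' b _ _ (hσ b' hb') (hσ b hb)
      refine this.trans (le_of_eq ?_)
      congr 1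
      exact Finset.sum_congr rfl fun j _ => abs_sub_comm _ _
  have hσmabs : ∀ i, |σm i b - σm i b'| ≤ U 1 * S := by
    intro i
    rw [abs_sub_le_iff]
    constructor
    · exact key_bound U hUmono hU0 _ b b' _ _ (hσm i b hb) (hσm i b' hb')
    · have := key_bound U hUmono hU0 (Finset.univ.erase i) b' b _ _ (hσm i b' hb') (hσm i b hb)
      refine this.trans (le_of_eq ?_)
      congr 1
      exact Finset.sum_congr rfl fun j _ => abs_sub_comm _ _
  -- combine
  have hmain : |pS b - pS b'| ≤ (2 * (n:ℝ)) * (U 1 * S) := by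
    rw [hpS b, hpS b']
    have h1 : |∑ i, σm i b - ∑ i, σm i b'| ≤ (n:ℝ) * (U 1 * S) := by
      rw [← Finset.sum_sub_distrib]
      calc |∑ i, (σm i b - σm i b')| ≤ ∑ i, |σm i b - σm i b'| :=
            Finset.abs_sum_le_sum_abs _ _
        _ ≤ ∑ _i : Fin n, U 1 * S := Finset.sum_le_sum fun i _ => hσmabs i
        _ = (n:ℝ) * (U 1 * S) := by simp [Finset.sum_const, nsmul_eq_mul]
    have h2 : |((n:ℝ) - 1) * σS b - ((n:ℝ) - 1) * σS b'| ≤ ((n:ℝ) - 1) * (U 1 * S) := by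
      rw [← mul_sub, abs_mul]
      have hn1 : (0:ℝ) ≤ (n:ℝ) - 1 := by
        have : (1:ℝ) ≤ (n:ℝ) := by exact_mod_cast hn
        linarith
      rw [abs_of_nonneg hn1]
      exact mul_le_mul_of_nonneg_left hσabs hn1
    calc |(∑ i, σm i b - ((n:ℝ) - 1) * σS b) - (∑ i, σm i b' - ((n:ℝ) - 1) * σS b')|
        = |(∑ i, σm i b - ∑ i, σm i b') - (((n:ℝ) - 1) * σS b - ((n:ℝ) - 1) * σS b')| := by
          ring_nf
      _ ≤ |∑ i, σm i b - ∑ i, σm i b'| + |((n:ℝ) - 1) * σS b - ((n:ℝ) - 1) * σS b'| :=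
          abs_sub _ _
      _ ≤ (n:ℝ) * (U 1 * S) + ((n:ℝ) - 1) * (U 1 * S) := add_le_add h1 h2
      _ ≤ (2 * (n:ℝ)) * (U 1 * S) := by nlinarith [mul_nonneg hU1 hS0]
  -- S ≤ √n ‖b - b'‖
  have hSnorm : S ≤ Real.sqrt n * ‖b - b'‖ := by
    have hnorm : ‖b - b'‖ = Real.sqrt (∑ j, |b j - b' j| ^ 2) := by
      rw [EuclideanSpace.norm_eq]
      simp [Real.norm_eq_abs]
    have hsq : S ^ 2 ≤ (n:ℝ) * ∑ j, |b j - b' j| ^ 2 := by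
      have := sq_sum_le_card_mul_sum_sq (s := (Finset.univ : Finset (Fin n)))
        (f := fun j => |b j - b' j|)
      simpa using this
    have : S ≤ Real.sqrt ((n:ℝ) * ∑ j, |b j - b' j| ^ 2) := by
      rw [← Real.sqrt_sq hS0]
      exact Real.sqrt_le_sqrt hsq
    refine this.trans (le_of_eq ?_)
    rw [Real.sqrt_mul (by positivity), hnorm]
  calc |pS b - pS b'| ≤ (2 * (n:ℝ)) * (U 1 * S) := hmain
    _ ≤ (2 * (n:ℝ)) * (U 1 * (Real.sqrt n * ‖b - b'‖)) := by
        refine mul_le_mul_of_nonneg_left ?_ (by positivity)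
        exact mul_le_mul_of_nonneg_left hSnorm hU1
    _ = 2 * U 1 * n * Real.sqrt n * ‖b - b'‖ := by ring
end

section
/- For a fixed θ_{−i}, the map θᵢ ↦ p_S(θᵢ, θ_{−i}) is monotonically increasing, where p_S is the Clarke pivotal surplus for valuations v̄ᵢ(a,θᵢ) satisfying: v̄ᵢ(·,θᵢ) strictly concave, strictly increasing, continuously differentiable on [0,1]; θᵢ ↦ v̄ᵢ(aᵢ,θᵢ) absolutely continuous with bounded derivative; and aᵢ ↦ ∂v̄ᵢ(aᵢ,θᵢ)/∂θᵢ increasing. -/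
/-!
Write `σ` for the optimal welfare and `σ₋ₖ` for the optimal welfare without agent `k`, so that
`p_S = -(n - 1) σ + ∑ₖ σ₋ₖ`. The term `σ₋ᵢ` does not depend on `θᵢ`, so it suffices that each
`σ₋ₖ`, `k ≠ i`, grows in `θᵢ` at least as fast as `σ`. Both are upper envelopes in `θᵢ`; by the
envelope theorem their derivatives are, almost everywhere, `∂v̄ᵢ/∂θᵢ` evaluated at agent `i`'s
optimal share. Removing agent `k` can only raise that share (an exchange argument using strict
concavity), and `∂v̄ᵢ/∂θᵢ` is increasing in the share. The envelopes differ from monotone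
functions by a differentiable term, so they are integrals of their derivatives and the pointwise
comparison integrates.
-/

open MeasureTheory Set Filter Topology Function Finset

theorem concaveOn_of_tendsto {E ι : Type*} [AddCommGroup E] [Module ℝ E] {l : Filter ι}
    [l.NeBot] {s : Set E} {f : ι → E → ℝ} {g : E → ℝ}
    (hf : ∀ᶠ k in l, ConcaveOn ℝ s (f k)) (hg : ∀ x ∈ s, Tendsto (fun k => f k x) l (𝓝 (g x))) :
    ConcaveOn ℝ s g := by
  have hs : Convex ℝ s := hf.exists.choose_spec.1
  refine ⟨hs, fun x hx y hy a b ha hb hab => ?_⟩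
  exact le_of_tendsto_of_tendsto (((hg x hx).const_smul a).add ((hg y hy).const_smul b))
    (hg _ (hs hx hy ha hb hab)) (hf.mono fun k hk => hk.2 hx hy ha hb hab)

theorem convex_combinations_of_shift {p q ε : ℝ} (hd : q - p + ε ≠ 0) :
    ((q - p) / (q - p + ε)) • p + (ε / (q - p + ε)) • (q + ε) = p + ε ∧
      (ε / (q - p + ε)) • p + ((q - p) / (q - p + ε)) • (q + ε) = q ∧
      (q - p) / (q - p + ε) + ε / (q - p + ε) = 1 := by
  simp only [smul_eq_mul]
  refine ⟨?_, ?_, ?_⟩ <;> field_simp <;> ring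

theorem ConcaveOn.add_le_add_of_le {s : Set ℝ} {f : ℝ → ℝ} (hf : ConcaveOn ℝ s f)
    {p q ε : ℝ} (hp : p ∈ s) (hq : q + ε ∈ s) (hpq : p ≤ q) (hε : 0 ≤ ε) :
    f p + f (q + ε) ≤ f (p + ε) + f q := by
  rcases (add_nonneg (sub_nonneg.2 hpq) hε).eq_or_lt with hd | hd
  · obtain rfl : q = p := by linarith
    obtain rfl : ε = 0 := by linarith
    simp
  obtain ⟨e₁, e₂, hw⟩ := convex_combinations_of_shift hd.ne'
  set α := (q - p) / (q - p + ε)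
  set β := ε / (q - p + ε)
  have hα : 0 ≤ α := div_nonneg (sub_nonneg.2 hpq) hd.le
  have hβ : 0 ≤ β := div_nonneg hε hd.le
  have h₁ := hf.2 hp hq hα hβ hw
  have h₂ := hf.2 hp hq hβ hα (by linarith)
  rw [e₁] at h₁
  rw [e₂] at h₂
  simp only [smul_eq_mul] at h₁ h₂
  linear_combination h₁ + h₂ - (f p + f (q + ε)) * hw

theorem StrictConcaveOn.add_lt_add_of_lt {s : Set ℝ} {f : ℝ → ℝ} (hf : StrictConcaveOn ℝ s f)
    {p q ε : ℝ} (hp : p ∈ s) (hq : q + ε ∈ s) (hpq : p < q) (hε : 0 < ε) :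
    f p + f (q + ε) < f (p + ε) + f q := by
  have hd : 0 < q - p + ε := by linarith
  obtain ⟨e₁, e₂, hw⟩ := convex_combinations_of_shift hd.ne'
  set α := (q - p) / (q - p + ε)
  set β := ε / (q - p + ε)
  have hα : 0 < α := div_pos (sub_pos.2 hpq) hd
  have hβ : 0 < β := div_pos hε hd
  have hne : p ≠ q + ε := by linarith
  have h₁ := hf.2 hp hq hne hα hβ hw
  have h₂ := hf.2 hp hq hne hβ hα (by linarith)
  rw [e₁] at h₁
  rw [e₂] at h₂
  simp only [smul_eq_mul] at h₁ h₂
  linear_combination h₁ + h₂ - (f p + f (q + ε)) * hw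

theorem Monotone.integral_deriv_le_sub {f : ℝ → ℝ} (hf : Monotone f) {a b : ℝ} (hab : a ≤ b) :
    ∫ x in a..b, deriv f x ≤ f b - f a := by
  have h := (hf.monotoneOn (uIcc a b)).intervalIntegral_deriv_mem_uIcc
  rw [uIcc_of_le (sub_nonneg.2 (hf hab))] at h
  exact h.2

/-- The sum has no singular part, hence neither monotone summand has one. -/
theorem Monotone.integral_deriv_eq_sub {f g h : ℝ → ℝ} (hf : Monotone f) (hg : Monotone g)
    (hfg : ∀ x, HasDerivAt (fun y => f y + g y) (h x) x) {a b : ℝ} (hab : a ≤ b) :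
    ∫ x in a..b, deriv f x = f b - f a := by
  have hderiv : deriv (fun y => f y + g y) = h := funext fun x => (hfg x).deriv
  have hh : ∫ x in a..b, h x = (f b + g b) - (f a + g a) :=
    intervalIntegral.integral_eq_sub_of_hasDerivAt (fun x _ => hfg x)
      (hderiv ▸ ((hf.add hg).monotoneOn _).intervalIntegrable_deriv)
  have hsplit : ∫ x in a..b, h x = (∫ x in a..b, deriv f x) + ∫ x in a..b, deriv g x := by
    rw [← intervalIntegral.integral_add ((hf.monotoneOn _).intervalIntegrable_deriv)
      ((hg.monotoneOn _).intervalIntegrable_deriv)]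
    refine intervalIntegral.integral_congr_ae ?_
    filter_upwards [hf.ae_differentiableAt, hg.ae_differentiableAt] with x hfx hgx _
    exact (hfg x).unique (hfx.hasDerivAt.add hgx.hasDerivAt)
  linarith [hf.integral_deriv_le_sub hab, hg.integral_deriv_le_sub hab]

theorem monotone_sub_of_monotoneOn_deriv {v D : ℝ → ℝ → ℝ}
    (hD : ∀ a ∈ Icc (0 : ℝ) 1, ∀ s, HasDerivAt (v a) (D a s) s)
    (hDmono : ∀ s, MonotoneOn (D · s) (Icc 0 1)) {a b : ℝ} (ha : a ∈ Icc (0 : ℝ) 1)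
    (hb : b ∈ Icc (0 : ℝ) 1) (hab : a ≤ b) : Monotone fun s => v b s - v a s := by
  have hder : ∀ s, HasDerivAt (fun s => v b s - v a s) (D b s - D a s) s :=
    fun s => (hD b hb s).sub (hD a ha s)
  refine monotone_of_deriv_nonneg (fun s => (hder s).differentiableAt) fun s => ?_
  rw [(hder s).deriv]
  exact sub_nonneg.2 (hDmono s ha hb hab)

/-- `F = ⨆ a, (v a · + φ a)` with `x s` a maximiser at `s` satisfies this. -/
def IsEnvelope (v : ℝ → ℝ → ℝ) (x F : ℝ → ℝ) : Prop :=
  ∀ s u, v (x s) u - v (x s) s ≤ F u - F s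

namespace IsEnvelope

variable {v D : ℝ → ℝ → ℝ} {x y F G : ℝ → ℝ}

theorem monotone_sub_left (hF : IsEnvelope v x F) (hx : ∀ s, x s ∈ Icc (0 : ℝ) 1)
    (hD : ∀ a ∈ Icc (0 : ℝ) 1, ∀ s, HasDerivAt (v a) (D a s) s)
    (hDmono : ∀ s, MonotoneOn (D · s) (Icc 0 1)) : Monotone fun s => F s - v 0 s := by
  intro s u hsu
  have := monotone_sub_of_monotoneOn_deriv hD hDmono (left_mem_Icc.2 zero_le_one) (hx s)
    (hx s).1 hsu
  linarith [hF s u]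

theorem monotone_sub_right (hF : IsEnvelope v x F) (hx : ∀ s, x s ∈ Icc (0 : ℝ) 1)
    (hD : ∀ a ∈ Icc (0 : ℝ) 1, ∀ s, HasDerivAt (v a) (D a s) s)
    (hDmono : ∀ s, MonotoneOn (D · s) (Icc 0 1)) : Monotone fun s => v 1 s - F s := by
  intro s u hsu
  have := monotone_sub_of_monotoneOn_deriv hD hDmono (hx u) (right_mem_Icc.2 zero_le_one)
    (hx u).2 hsu
  linarith [hF u s]

/-- The envelope theorem. -/
theorem deriv_sub_eq (hF : IsEnvelope v x F) (hx : ∀ s, x s ∈ Icc (0 : ℝ) 1)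
    (hD : ∀ a ∈ Icc (0 : ℝ) 1, ∀ s, HasDerivAt (v a) (D a s) s) {s : ℝ}
    (hs : DifferentiableAt ℝ (fun u => F u - v 0 u) s) :
    deriv (fun u => F u - v 0 u) s = D (x s) s - D 0 s := by
  have hmin : IsLocalMin (fun u => (F u - v 0 u) - (v (x s) u - v 0 u)) s :=
    Eventually.of_forall fun u => by linarith [hF s u]
  have := hmin.hasDerivAt_eq_zero
    (hs.hasDerivAt.sub ((hD (x s) (hx s) s).sub (hD 0 (left_mem_Icc.2 zero_le_one) s)))
  linarith

theorem integral_deriv_sub_eq (hF : IsEnvelope v x F) (hx : ∀ s, x s ∈ Icc (0 : ℝ) 1)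
    (hD : ∀ a ∈ Icc (0 : ℝ) 1, ∀ s, HasDerivAt (v a) (D a s) s)
    (hDmono : ∀ s, MonotoneOn (D · s) (Icc 0 1)) {t t' : ℝ} (htt' : t ≤ t') :
    ∫ s in t..t', deriv (fun u => F u - v 0 u) s = (F t' - v 0 t') - (F t - v 0 t) := by
  refine (hF.monotone_sub_left hx hD hDmono).integral_deriv_eq_sub
    (hF.monotone_sub_right hx hD hDmono) (h := fun s => D 1 s - D 0 s) (fun s => ?_) htt'
  have hsum : (fun u => F u - v 0 u + (v 1 u - F u)) = fun u => v 1 u - v 0 u := by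
    ext u
    ring
  rw [hsum]
  exact (hD 1 (right_mem_Icc.2 zero_le_one) s).sub (hD 0 (left_mem_Icc.2 zero_le_one) s)

theorem sub_le_sub (hF : IsEnvelope v x F) (hG : IsEnvelope v y G)
    (hx : ∀ s, x s ∈ Icc (0 : ℝ) 1) (hy : ∀ s, y s ∈ Icc (0 : ℝ) 1)
    (hD : ∀ a ∈ Icc (0 : ℝ) 1, ∀ s, HasDerivAt (v a) (D a s) s)
    (hDmono : ∀ s, MonotoneOn (D · s) (Icc 0 1)) {t t' : ℝ} (htt' : t ≤ t')
    (hxy : ∀ s ∈ Ioo t t', x s ≤ y s) :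
    F t' - F t ≤ G t' - G t := by
  have hFmono := hF.monotone_sub_left hx hD hDmono
  have hGmono := hG.monotone_sub_left hy hD hDmono
  have hderiv : ∀ᵐ s ∂volume.restrict (Icc t t'),
      deriv (fun u => F u - v 0 u) s ≤ deriv (fun u => G u - v 0 u) s := by
    rw [← Measure.restrict_congr_set Ioo_ae_eq_Icc, ae_restrict_iff' measurableSet_Ioo]
    filter_upwards [hFmono.ae_differentiableAt, hGmono.ae_differentiableAt] with s hFs hGs hs
    rw [hF.deriv_sub_eq hx hD hFs, hG.deriv_sub_eq hy hD hGs]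
    exact sub_le_sub_right (hDmono s (hx s) (hy s) (hxy s hs)) _
  have hle := intervalIntegral.integral_mono_ae_restrict htt'
    ((hFmono.monotoneOn _).intervalIntegrable_deriv)
    ((hGmono.monotoneOn _).intervalIntegrable_deriv) hderiv
  rw [hF.integral_deriv_sub_eq hx hD hDmono htt'] at hle
  linarith [hGmono.integral_deriv_le_sub htt']

end IsEnvelope

theorem Finset.sum_apply_update {ι M : Type*} [DecidableEq ι] [AddCommGroup M] {s : Finset ι}
    (g : ι → ℝ → M) (b : ι → ℝ) {i : ι} (hi : i ∈ s) (c : ℝ) :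
    ∑ j ∈ s, g j (update b i c j) = ∑ j ∈ s, g j (b j) + (g i c - g i (b i)) := by
  simp_rw [apply_update g]
  rw [sum_update_of_mem hi, sum_eq_add_sum_sdiff_singleton_of_mem hi]
  abel

section Allocation

variable {ι : Type*}

def budgetSet (S : Finset ι) : Set (ι → ℝ) :=
  {a | (∀ j, 0 ≤ a j) ∧ ∑ j ∈ S, a j ≤ 1}

def IsOptimalAlloc (v : ι → ℝ → ℝ) (S : Finset ι) (a : ι → ℝ) : Prop :=
  a ∈ budgetSet S ∧ IsMaxOn (fun c => ∑ j ∈ S, v j (c j)) (budgetSet S) a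

namespace IsOptimalAlloc

variable {v : ι → ℝ → ℝ} {S : Finset ι} {a : ι → ℝ} {i : ι}

theorem of_isGreatest
    (ha : (∀ j, 0 ≤ a j) ∧ ∑ j ∈ S, a j ≤ 1)
    (hmax : IsGreatest {w | ∃ c : ι → ℝ, (∀ j, 0 ≤ c j) ∧ ∑ j ∈ S, c j ≤ 1 ∧
      w = ∑ j ∈ S, v j (c j)} (∑ j ∈ S, v j (a j))) :
    IsOptimalAlloc v S a :=
  ⟨ha, isMaxOn_iff.2 fun c hc => hmax.2 ⟨c, hc.1, hc.2, rfl⟩⟩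

theorem mem_Icc (ha : IsOptimalAlloc v S a) (hi : i ∈ S) : a i ∈ Icc (0 : ℝ) 1 :=
  ⟨ha.1.1 i, (single_le_sum (fun j _ => ha.1.1 j) hi).trans ha.1.2⟩

theorem sum_eq_one [DecidableEq ι] (ha : IsOptimalAlloc v S a) (hi : i ∈ S)
    (hmono : StrictMonoOn (v i) (Icc 0 1)) :
    ∑ j ∈ S, a j = 1 := by
  by_contra hne
  set δ := 1 - ∑ j ∈ S, a j
  have hδ : 0 < δ := sub_pos.2 (lt_of_le_of_ne ha.1.2 hne)
  have hai : a i + δ ≤ 1 := by linarith [single_le_sum (fun j _ => ha.1.1 j) hi]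
  have hc : update a i (a i + δ) ∈ budgetSet S := by
    refine ⟨fun j => ?_, ?_⟩
    · simp only [update_apply]
      split_ifs <;> linarith [ha.1.1 j, ha.1.1 i]
    · rw [sum_apply_update (fun _ x => x) a hi]
      linarith
  have hle := isMaxOn_iff.1 ha.2 _ hc
  have hlt := hmono (ha.mem_Icc hi) ⟨add_nonneg (ha.1.1 i) hδ.le, hai⟩ (lt_add_of_pos_right _ hδ)
  rw [sum_apply_update v a hi] at hle
  linarith

theorem add_le_add_of_transfer [DecidableEq ι] (ha : IsOptimalAlloc v S a) {l : ι} (hi : i ∈ S)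
    (hl : l ∈ S) (hil : i ≠ l) {ε : ℝ} (hε : 0 ≤ ε) (hεl : ε ≤ a l) :
    v i (a i + ε) + v l (a l - ε) ≤ v i (a i) + v l (a l) := by
  set c := update (update a l (a l - ε)) i (a i + ε)
  have hsum : ∀ g : ι → ℝ → ℝ, ∑ j ∈ S, g j (c j) =
      ∑ j ∈ S, g j (a j) + (g l (a l - ε) - g l (a l)) + (g i (a i + ε) - g i (a i)) := by
    intro g
    rw [sum_apply_update g _ hi, sum_apply_update g a hl, update_of_ne hil]
  have hc : c ∈ budgetSet S := by
    refine ⟨fun j => ?_, ?_⟩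
    · simp only [c, update_apply]
      split_ifs <;> linarith [ha.1.1 j, ha.1.1 i]
    · rw [hsum fun _ x => x]
      linarith [ha.1.2]
  have hle := isMaxOn_iff.1 ha.2 _ hc
  rw [hsum v] at hle
  linarith

/-- If `b i < a i`, some `l ≠ i` gets more under `b` than under `a` (`b` exhausts the budget);
by concavity, moving a little from `l` to `i` would then improve `b`. -/
theorem apply_le_of_subset [DecidableEq ι] {T : Finset ι} {b : ι → ℝ}
    (ha : IsOptimalAlloc v T a) (hb : IsOptimalAlloc v S b) (hST : S ⊆ T) (hi : i ∈ S)
    (hconc : ∀ j ∈ S, ConcaveOn ℝ (Icc 0 1) (v j)) (hiconc : StrictConcaveOn ℝ (Icc 0 1) (v i))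
    (himono : StrictMonoOn (v i) (Icc 0 1)) : a i ≤ b i := by
  by_contra! hba
  obtain ⟨l, hl, hli, hal⟩ : ∃ l ∈ S, l ≠ i ∧ a l < b l := by
    by_contra! h
    have hlt : ∑ j ∈ S, b j < ∑ j ∈ S, a j :=
      sum_lt_sum (fun j hj => (eq_or_ne j i).elim (· ▸ hba.le) (h j hj)) ⟨i, hi, hba⟩
    linarith [hb.sum_eq_one hi himono, ha.1.2,
      sum_le_sum_of_subset_of_nonneg hST fun j _ _ => ha.1.1 j]
  set ε := min ((a i - b i) / 2) (b l - a l)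
  have hε : 0 < ε := lt_min (by linarith) (by linarith)
  have hεi : ε ≤ (a i - b i) / 2 := min_le_left _ _
  have hεl : ε ≤ b l - a l := min_le_right _ _
  have hbi := hb.mem_Icc hi
  have hbl := hb.mem_Icc hl
  have hal' := ha.mem_Icc (hST hl)
  have hA := ha.add_le_add_of_transfer (hST hl) (hST hi) hli hε.le (by linarith [hbi.1])
  have hB := hb.add_le_add_of_transfer hi hl (Ne.symm hli) hε.le (by linarith [hal'.1])
  have hl_conc := (hconc l hl).add_le_add_of_le (q := b l - ε) hal' (by simpa using hbl)
    (by linarith) hε.le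
  have hi_conc := hiconc.add_lt_add_of_lt (q := a i - ε) hbi (by simpa using ha.mem_Icc (hST hi))
    (by linarith) hε
  simp only [sub_add_cancel] at hl_conc hi_conc
  linarith

theorem isEnvelope [DecidableEq ι] {w : ι → ℝ → ℝ → ℝ} {θ : ι → ℝ} {A : ℝ → ι → ℝ}
    (hi : i ∈ S) (hA : ∀ s, IsOptimalAlloc (fun j a => w j a (update θ i s j)) S (A s)) :
    IsEnvelope (w i) (fun s => A s i) fun s => ∑ j ∈ S, w j (A s j) (update θ i s j) := by
  intro s u
  have hsplit : ∑ j ∈ S, w j (A s j) (update θ i u j) =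
      ∑ j ∈ S, w j (A s j) (update θ i s j) + (w i (A s i) u - w i (A s i) s) := by
    rw [← update_idem s u θ, sum_apply_update (fun j => w j (A s j)) _ hi, update_self]
  have hle := isMaxOn_iff.1 (hA u).2 _ (hA s).1
  simp only at hle
  linarith

end IsOptimalAlloc

end Allocation

theorem welfare_sub_le_sub_of_subset {ι : Type*} [DecidableEq ι] {w : ι → ℝ → ℝ → ℝ}
    {D : ℝ → ℝ → ℝ} {θ : ι → ℝ} {S T : Finset ι} {A B : ℝ → ι → ℝ} {i : ι} {t t' : ℝ}
    (hA : ∀ s, IsOptimalAlloc (fun j a => w j a (update θ i s j)) T (A s))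
    (hB : ∀ s, IsOptimalAlloc (fun j a => w j a (update θ i s j)) S (B s))
    (hST : S ⊆ T) (hi : i ∈ S)
    (hD : ∀ a ∈ Icc (0 : ℝ) 1, ∀ s, HasDerivAt (w i a) (D a s) s)
    (hDmono : ∀ s, MonotoneOn (D · s) (Icc 0 1))
    (hconc : ∀ s ∈ Ioo t t', ∀ j ∈ S, ConcaveOn ℝ (Icc 0 1) fun a => w j a (update θ i s j))
    (hiconc : ∀ s ∈ Ioo t t', StrictConcaveOn ℝ (Icc 0 1) fun a => w i a s)
    (himono : ∀ s ∈ Ioo t t', StrictMonoOn (fun a => w i a s) (Icc 0 1)) (htt' : t ≤ t') :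
    ∑ j ∈ T, w j (A t' j) (update θ i t' j) - ∑ j ∈ T, w j (A t j) (update θ i t j) ≤
      ∑ j ∈ S, w j (B t' j) (update θ i t' j) - ∑ j ∈ S, w j (B t j) (update θ i t j) :=
  (IsOptimalAlloc.isEnvelope (hST hi) hA).sub_le_sub (IsOptimalAlloc.isEnvelope hi hB)
    (fun s => (hA s).mem_Icc (hST hi)) (fun s => (hB s).mem_Icc hi) hD hDmono htt'
    fun s hs => (hA s).apply_le_of_subset (hB s) hST hi (hconc s hs)
      (by simpa using hiconc s hs) (by simpa using himono s hs)

theorem neg_mul_add_sum_le_of_forall_ne {ι : Type*} [Fintype ι] [DecidableEq ι] {i : ι}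
    {x y : ℝ} {f g : ι → ℝ} (hi : f i = g i) (h : ∀ k, k ≠ i → y - x ≤ g k - f k) :
    -((Fintype.card ι : ℝ) - 1) * x + ∑ k, f k ≤ -((Fintype.card ι : ℝ) - 1) * y + ∑ k, g k := by
  have hsum := sum_le_sum (s := univ.erase i) fun k hk => h k (ne_of_mem_erase hk)
  rw [sum_const, card_erase_of_mem (mem_univ i), card_univ, nsmul_eq_mul,
    Nat.cast_pred (Fintype.card_pos_iff.2 ⟨i⟩), sum_sub_distrib] at hsum
  rw [← add_sum_erase _ f (mem_univ i), ← add_sum_erase _ g (mem_univ i)]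
  linarith

theorem pS_monotone_general {n : ℕ}
    (vbar : Fin n → ℝ → ℝ → ℝ)  -- vbar i a t : valuation of agent i at allocation a, parameter t
    (Dt : Fin n → ℝ → ℝ → ℝ)    -- ∂ vbar i a t / ∂ t
    (hconc : ∀ i t, 0 < t → StrictConcaveOn ℝ (Set.Icc (0:ℝ) 1) (fun a => vbar i a t))
    (hmono : ∀ i t, 0 < t → StrictMonoOn (fun a => vbar i a t) (Set.Icc 0 1))
    (hDt : ∀ i a t, a ∈ Set.Icc (0:ℝ) 1 → HasDerivAt (fun s => vbar i a s) (Dt i a t) t)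
    (hDtmono : ∀ i t, MonotoneOn (fun a => Dt i a t) (Set.Icc 0 1))
    (astar : (Fin n → ℝ) → Fin n → ℝ)
    (hastarfeas : ∀ θ, (∀ j, 0 ≤ astar θ j) ∧ (∑ j, astar θ j) ≤ 1)
    (hastar : ∀ θ : Fin n → ℝ,
      IsGreatest {w | ∃ a : Fin n → ℝ, (∀ j, 0 ≤ a j) ∧ (∑ j, a j) ≤ 1 ∧
        w = ∑ j, vbar j (a j) (θ j)} (∑ j, vbar j (astar θ j) (θ j)))
    (astarm : Fin n → (Fin n → ℝ) → Fin n → ℝ)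
    (hastarmfeas : ∀ i θ, (∀ j, 0 ≤ astarm i θ j) ∧ (∑ j ∈ Finset.univ.erase i, astarm i θ j) ≤ 1)
    (hastarm : ∀ (i : Fin n) (θ : Fin n → ℝ),
      IsGreatest {w | ∃ a : Fin n → ℝ, (∀ j, 0 ≤ a j) ∧ (∑ j ∈ Finset.univ.erase i, a j) ≤ 1 ∧
        w = ∑ j ∈ Finset.univ.erase i, vbar j (a j) (θ j)}
        (∑ j ∈ Finset.univ.erase i, vbar j (astarm i θ j) (θ j)))
    (hastarmInd : ∀ i θ θ', (∀ j, j ≠ i → θ j = θ' j) → astarm i θ = astarm i θ')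
    (pS : (Fin n → ℝ) → ℝ)
    (hpS : ∀ θ, pS θ = -((n : ℝ) - 1) * (∑ j, vbar j (astar θ j) (θ j))
        + ∑ i, ∑ j ∈ Finset.univ.erase i, vbar j (astarm i θ j) (θ j)) :
    ∀ (i : Fin n) (θ : Fin n → ℝ), (∀ j, 0 ≤ θ j) →
      ∀ t t' : ℝ, 0 ≤ t → t ≤ t' →
        pS (Function.update θ i t) ≤ pS (Function.update θ i t') := by
  intro i θ hθ t t' ht htt'
  have hopt : ∀ θ, IsOptimalAlloc (fun j a => vbar j a (θ j)) univ (astar θ) :=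
    fun θ => .of_isGreatest (hastarfeas θ) (hastar θ)
  have hoptm : ∀ k θ, IsOptimalAlloc (fun j a => vbar j a (θ j)) (univ.erase k) (astarm k θ) :=
    fun k θ => .of_isGreatest (hastarmfeas k θ) (hastarm k θ)
  have hconc' : ∀ j τ, 0 ≤ τ → ConcaveOn ℝ (Icc 0 1) fun a => vbar j a τ := fun j τ hτ =>
    concaveOn_of_tendsto (l := 𝓝[>] τ)
      (eventually_nhdsWithin_of_forall fun u hu => (hconc j u (hτ.trans_lt hu)).concaveOn)
      fun a ha => (hDt j a τ ha).continuousAt.tendsto.mono_left nhdsWithin_le_nhds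
  have hσi : ∀ s, ∑ j ∈ univ.erase i, vbar j (astarm i (update θ i s) j) (update θ i s j) =
      ∑ j ∈ univ.erase i, vbar j (astarm i θ j) (θ j) := fun s => by
    rw [hastarmInd i _ θ fun j hj => update_of_ne hj _ _]
    exact sum_congr rfl fun j hj => by rw [update_of_ne (ne_of_mem_erase hj)]
  rw [hpS, hpS]
  convert neg_mul_add_sum_le_of_forall_ne (i := i) ?_ fun k hki => ?_ using 4
  iterate 2 rw [Fintype.card_fin]
  · exact (hσi t).trans (hσi t').symm
  refine welfare_sub_le_sub_of_subset (fun s => hopt _) (fun s => hoptm k _) (erase_subset k univ)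
    (mem_erase.2 ⟨hki.symm, mem_univ i⟩) (fun a ha s => hDt i a s ha) (hDtmono i)
    (fun s hs j _ => hconc' j _ ?_) (fun s hs => hconc i s (ht.trans_lt hs.1))
    (fun s hs => hmono i s (ht.trans_lt hs.1)) htt'
  rw [update_apply]
  split_ifs
  exacts [ht.trans hs.1.le, hθ j]

/-- for fixed θ_{-i}, the Clarke pivotal surplus p_S is monotonically
increasing in θ_i, under regularity assumptions on the surrogate valuations v̄ᵢ. -/
theorem pS_monotone {n : ℕ} (hn : 2 ≤ n)
    (vbar : Fin n → ℝ → ℝ → ℝ)  -- vbar i a t : valuation of agent i at allocation a, parameter t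
    (Dt : Fin n → ℝ → ℝ → ℝ)    -- ∂ vbar i a t / ∂ t
    (hconc : ∀ i t, 0 < t → StrictConcaveOn ℝ (Set.Icc (0:ℝ) 1) (fun a => vbar i a t))
    (hmono : ∀ i t, 0 < t → StrictMonoOn (fun a => vbar i a t) (Set.Icc 0 1))
    (hdiff : ∀ i t, 0 < t → ContDiffOn ℝ 1 (fun a => vbar i a t) (Set.Icc 0 1))
    (hDt : ∀ i a t, a ∈ Set.Icc (0:ℝ) 1 → HasDerivAt (fun s => vbar i a s) (Dt i a t) t)
    (hB : ∀ i, ∃ B : ℝ → ℝ, ∀ a ∈ Set.Icc (0:ℝ) 1, ∀ t, |Dt i a t| ≤ B t)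
    (hDtmono : ∀ i t, MonotoneOn (fun a => Dt i a t) (Set.Icc 0 1))
    (astar : (Fin n → ℝ) → Fin n → ℝ)
    (hastarfeas : ∀ θ, (∀ j, 0 ≤ astar θ j) ∧ (∑ j, astar θ j) ≤ 1)
    (hastar : ∀ θ : Fin n → ℝ,
      IsGreatest {w | ∃ a : Fin n → ℝ, (∀ j, 0 ≤ a j) ∧ (∑ j, a j) ≤ 1 ∧
        w = ∑ j, vbar j (a j) (θ j)} (∑ j, vbar j (astar θ j) (θ j)))
    (astarm : Fin n → (Fin n → ℝ) → Fin n → ℝ)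
    (hastarmfeas : ∀ i θ, (∀ j, 0 ≤ astarm i θ j) ∧ (∑ j ∈ Finset.univ.erase i, astarm i θ j) ≤ 1)
    (hastarm : ∀ (i : Fin n) (θ : Fin n → ℝ),
      IsGreatest {w | ∃ a : Fin n → ℝ, (∀ j, 0 ≤ a j) ∧ (∑ j ∈ Finset.univ.erase i, a j) ≤ 1 ∧
        w = ∑ j ∈ Finset.univ.erase i, vbar j (a j) (θ j)}
        (∑ j ∈ Finset.univ.erase i, vbar j (astarm i θ j) (θ j)))
    (hastarmInd : ∀ i θ θ', (∀ j, j ≠ i → θ j = θ' j) → astarm i θ = astarm i θ')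
    (pS : (Fin n → ℝ) → ℝ)
    (hpS : ∀ θ, pS θ = -((n : ℝ) - 1) * (∑ j, vbar j (astar θ j) (θ j))
        + ∑ i, ∑ j ∈ Finset.univ.erase i, vbar j (astarm i θ j) (θ j)) :
    ∀ (i : Fin n) (θ : Fin n → ℝ), (∀ j, 0 ≤ θ j) →
      ∀ t t' : ℝ, 0 ≤ t → t ≤ t' →
        pS (Function.update θ i t) ≤ pS (Function.update θ i t') :=
  pS_monotone_general vbar Dt hconc hmono hDt hDtmono astar hastarfeas hastar astarm hastarmfeas
    hastarm hastarmInd pS hpS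
end

section
/- Suppose the feasibility constraint n·c₀ + Σ_{i=1}^{n−1} cᵢ·(i·θ_{i+1} + (n−i)·θᵢ) ≤ p_S(θ) holds for all ordered θ (θ₁ ≥ … ≥ θₙ ≥ 0), and the voluntary participation constraint c₀ + Σ_{j<i} cⱼθⱼ + Σ_{j≥i} cⱼθ_{j+1} ≥ q_i(θ) holds for all such θ and all i. Then c₀ = 0 and c₁ = 0. -/
/-- e_k : the bid vector with k ones (in positions 1,…,k) followed by zeros. -/
def eVec (k : ℕ) : ℕ → ℝ := fun j => if 1 ≤ j ∧ j ≤ k then 1 else 0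

/-- Ordered nonnegative bid vectors (agents indexed 1,…,n). -/
def OrderedBids (n : ℕ) (θ : ℕ → ℝ) : Prop :=
  (∀ k ∈ Finset.Icc 1 (n - 1), θ (k + 1) ≤ θ k) ∧ 0 ≤ θ n

lemma eVec0_eq (j : ℕ) : eVec 0 j = 0 := by
  simp only [eVec]
  rw [if_neg (by omega)]

lemma eVec1_eq (j : ℕ) : eVec 1 j = if j = 1 then 1 else 0 := by
  simp only [eVec]
  rw [if_congr (show (1 ≤ j ∧ j ≤ 1) ↔ j = 1 by omega) rfl rfl]

lemma ordered0 (n : ℕ) : OrderedBids n (eVec 0) := by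
  constructor <;> simp [eVec0_eq]

lemma ordered1 (n : ℕ) (hn : 3 ≤ n) : OrderedBids n (eVec 1) := by
  constructor
  · intro k hk
    simp only [Finset.mem_Icc] at hk
    rw [eVec1_eq, eVec1_eq, if_neg (by omega)]
    split <;> norm_num
  · rw [eVec1_eq]
    split <;> norm_num

/-- feasibility (F) and voluntary participation (VP) force c₀ = c₁ = 0. -/
theorem c0_c1_eq_zero {n : ℕ} (hn : 3 ≤ n)
    (c : ℕ → ℝ) (pS : (ℕ → ℝ) → ℝ) (q : ℕ → (ℕ → ℝ) → ℝ)
    (hpSe0 : pS (eVec 0) = 0) (hpSe1 : pS (eVec 1) = 0)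
    (hqe0 : ∀ i ∈ Finset.Icc 1 n, q i (eVec 0) = 0)
    (hqe1 : q 2 (eVec 1) = 0)
    (hF : ∀ θ : ℕ → ℝ, OrderedBids n θ →
      (n : ℝ) * c 0 + ∑ i ∈ Finset.Icc 1 (n - 1), c i * ((i : ℝ) * θ (i + 1) + ((n : ℝ) - i) * θ i)
        ≤ pS θ)
    (hVP : ∀ θ : ℕ → ℝ, OrderedBids n θ → ∀ i ∈ Finset.Icc 1 n,
      q i θ ≤ c 0 + (∑ j ∈ Finset.Icc 1 (i - 1), c j * θ j)
        + ∑ j ∈ Finset.Icc i (n - 1), c j * θ (j + 1)) :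
    c 0 = 0 ∧ c 1 = 0 := by
  have hnpos : (0:ℝ) < n := by positivity
  -- F at e0 : n * c 0 ≤ 0
  have hF0 := hF (eVec 0) (ordered0 n)
  rw [hpSe0] at hF0
  simp only [eVec0_eq, mul_zero, zero_mul, add_zero, mul_zero, Finset.sum_const_zero] at hF0
  -- VP at e0, i = 1 : 0 ≤ c 0
  have hVP0 := hVP (eVec 0) (ordered0 n) 1 (by simp; omega)
  rw [hqe0 1 (by simp; omega)] at hVP0
  simp only [eVec0_eq, mul_zero, Finset.sum_const_zero, add_zero] at hVP0
  have hc0 : c 0 = 0 := by nlinarith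
  refine ⟨hc0, ?_⟩
  -- F at e1
  have hF1 := hF (eVec 1) (ordered1 n hn)
  rw [hpSe1, hc0, mul_zero, zero_add] at hF1
  have hsum1 : ∑ i ∈ Finset.Icc 1 (n - 1),
      c i * ((i : ℝ) * eVec 1 (i + 1) + ((n : ℝ) - i) * eVec 1 i)
      = c 1 * ((n:ℝ) - 1) := by
    rw [Finset.sum_eq_single 1]
    · simp [eVec1_eq]
    · intro b hb hb1
      simp only [Finset.mem_Icc] at hb
      rw [eVec1_eq, eVec1_eq]
      rw [if_neg (by omega), if_neg hb1]
      ring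
    · intro h
      simp only [Finset.mem_Icc] at h
      omega
  rw [hsum1] at hF1
  -- VP at e1, i = 2
  have hVP1 := hVP (eVec 1) (ordered1 n hn) 2 (by simp; omega)
  rw [hqe1, hc0] at hVP1
  have hs1 : ∑ j ∈ Finset.Icc 1 (2 - 1), c j * eVec 1 j = c 1 := by
    simp [eVec1_eq]
  have hs2 : ∑ j ∈ Finset.Icc 2 (n - 1), c j * eVec 1 (j + 1) = 0 := by
    apply Finset.sum_eq_zero
    intro j hj
    simp only [Finset.mem_Icc] at hj
    rw [eVec1_eq, if_neg (by omega), mul_zero]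
  rw [hs1, hs2] at hVP1
  have : (3:ℝ) ≤ (n:ℝ) := by exact_mod_cast hn
  nlinarith
end

section
/- With surrogate valuation v̄(a,θ) = θ·U(a) where U is strictly increasing with U(0)=0, for every θ in the ordered set with θ₁ = θ₂ = 1, the Clarke surplus satisfies p_S(θ) ≥ p_S(e₂) = 2U(1) − 2U(1/2) > 0, where e₂ = (1,1,0,…,0). -/
/-!
At `e₂` only the two unit bidders matter. With both present, concavity makes the equal split
optimal, so the welfare is `2 U (1/2)`; without one of them, the other takes the whole good and
the welfare is `U 1`. Summing the `n` welfares without a bidder (two of them `U 1`, the rest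
`2 U (1/2)`) and subtracting `n - 1` copies of `2 U (1/2)` gives `p_S(e₂) = 2 U 1 - 2 U (1/2)`,
positive since `U` is strictly increasing. The lower bound is monotonicity of `p_S`, as `e₂ ≤ θ`.
-/

open Finset

lemma add_le_two_mul_apply_half {U : ℝ → ℝ} (hmono : MonotoneOn U (Set.Icc 0 1))
    (hconc : ConcaveOn ℝ (Set.Icc 0 1) U) {x y : ℝ} (hx : 0 ≤ x) (hy : 0 ≤ y)
    (hxy : x + y ≤ 1) : U x + U y ≤ 2 * U (1 / 2) := by
  have hmid : U (1 / 2 * x + 1 / 2 * y) ≤ U (1 / 2) :=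
    hmono ⟨by positivity, by linarith⟩ ⟨by norm_num, by norm_num⟩ (by linarith)
  have hjensen := hconc.2 ⟨hx, by linarith⟩ ⟨hy, by linarith⟩
    (by norm_num : (0 : ℝ) ≤ 1 / 2) (by norm_num : (0 : ℝ) ≤ 1 / 2) (by norm_num)
  simp only [smul_eq_mul] at hjensen
  linarith

variable {ι : Type*} [DecidableEq ι]

/-- The paper's `e₂` is `pairProfile 0 1`. -/
def pairProfile (i j : ι) : ι → ℝ := fun k => if k ∈ ({i, j} : Finset ι) then 1 else 0

lemma pairProfile_apply_left (i j : ι) : pairProfile i j i = 1 :=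
  if_pos (mem_insert_self i {j})

lemma pairProfile_apply_right (i j : ι) : pairProfile i j j = 1 :=
  if_pos (mem_insert_of_mem (mem_singleton_self j))

lemma pairProfile_nonneg (i j k : ι) : 0 ≤ pairProfile i j k := by
  unfold pairProfile; split <;> norm_num

lemma pairProfile_le {θ : ι → ℝ} (hθ : ∀ k, 0 ≤ θ k) {i j : ι} (hi : 1 ≤ θ i) (hj : 1 ≤ θ j)
    (k : ι) : pairProfile i j k ≤ θ k := by
  by_cases hk : k ∈ ({i, j} : Finset ι)
  · rcases mem_insert.mp hk with rfl | hk
    · exact (pairProfile_apply_left k j).trans_le hi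
    · rw [mem_singleton.mp hk]
      exact (pairProfile_apply_right i j).trans_le hj
  · exact (if_neg hk).trans_le (hθ k)

lemma sum_pairProfile_mul (i j : ι) (s : Finset ι) (f : ι → ℝ) :
    ∑ k ∈ s, pairProfile i j k * f k = ∑ k ∈ s ∩ {i, j}, f k := by
  simp only [pairProfile, ite_mul, one_mul, zero_mul, sum_ite_mem]

variable [Fintype ι]

/-- `σ_S θ` is the greatest element of `welfareSet U θ univ`, and `σ_{S,-i} θ` that of
`welfareSet U θ (univ.erase i)`. -/
def welfareSet (U : ℝ → ℝ) (θ : ι → ℝ) (s : Finset ι) : Set ℝ :=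
  {w | ∃ a : ι → ℝ, (∀ j, 0 ≤ a j) ∧ ∑ j, a j ≤ 1 ∧ w = ∑ j ∈ s, θ j * U (a j)}

lemma isGreatest_welfareSet_pairProfile_of_mem {U : ℝ → ℝ} (hmono : MonotoneOn U (Set.Icc 0 1))
    (hconc : ConcaveOn ℝ (Set.Icc 0 1) U) {i j : ι} (hij : i ≠ j) {s : Finset ι}
    (hi : i ∈ s) (hj : j ∈ s) :
    IsGreatest (welfareSet U (pairProfile i j) s) (2 * U (1 / 2)) := by
  have hsum : ∀ a : ι → ℝ, ∑ k ∈ s, pairProfile i j k * U (a k) = U (a i) + U (a j) := by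
    intro a
    rw [sum_pairProfile_mul, inter_eq_right.mpr (insert_subset hi (singleton_subset_iff.mpr hj)),
      sum_pair hij]
  refine ⟨⟨fun k => pairProfile i j k * (1 / 2),
    fun k => mul_nonneg (pairProfile_nonneg i j k) (by norm_num), ?_, ?_⟩, ?_⟩
  · rw [sum_pairProfile_mul, univ_inter, sum_const, card_pair hij]
    norm_num
  · rw [hsum, pairProfile_apply_left, pairProfile_apply_right]
    ring_nf
  · rintro w ⟨a, ha, hle, rfl⟩
    rw [hsum]
    exact add_le_two_mul_apply_half hmono hconc (ha i) (ha j)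
      ((add_le_sum (fun k _ => ha k) (mem_univ i) (mem_univ j) hij).trans hle)

lemma isGreatest_welfareSet_pairProfile_of_inter_eq_singleton {U : ℝ → ℝ}
    (hmono : MonotoneOn U (Set.Icc 0 1)) {i j k : ι} {s : Finset ι} (hs : s ∩ {i, j} = {k}) :
    IsGreatest (welfareSet U (pairProfile i j) s) (U 1) := by
  have hsum : ∀ a : ι → ℝ, ∑ l ∈ s, pairProfile i j l * U (a l) = U (a k) := by
    intro a
    rw [sum_pairProfile_mul, hs, sum_singleton]
  refine ⟨⟨Pi.single k 1, fun l => ?_, by simp, by simp [hsum]⟩, ?_⟩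
  · by_cases hl : l = k <;> simp [hl]
  · rintro w ⟨a, ha, hle, rfl⟩
    have hak : a k ≤ 1 := (single_le_sum (fun l _ => ha l) (mem_univ k)).trans hle
    rw [hsum]
    exact hmono ⟨ha k, hak⟩ ⟨zero_le_one, le_rfl⟩ hak

lemma erase_inter_pair_left {i j : ι} (hij : i ≠ j) : (univ.erase i) ∩ {i, j} = {j} := by
  ext k
  simp only [mem_inter, mem_erase, mem_univ, mem_insert, mem_singleton]
  constructor
  · rintro ⟨⟨hki, -⟩, rfl | rfl⟩
    exacts [absurd rfl hki, rfl]
  · rintro rfl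
    exact ⟨⟨hij.symm, trivial⟩, Or.inr rfl⟩

lemma clarkeSurplus_pairProfile {U : ℝ → ℝ} (hmono : MonotoneOn U (Set.Icc 0 1))
    (hconc : ConcaveOn ℝ (Set.Icc 0 1) U) {i j : ι} (hij : i ≠ j)
    {σS : (ι → ℝ) → ℝ} {σm : ι → (ι → ℝ) → ℝ}
    (hσ : IsGreatest (welfareSet U (pairProfile i j) univ) (σS (pairProfile i j)))
    (hσm : ∀ k, IsGreatest (welfareSet U (pairProfile i j) (univ.erase k))
      (σm k (pairProfile i j))) :
    ∑ k, σm k (pairProfile i j) - ((Fintype.card ι : ℝ) - 1) * σS (pairProfile i j)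
      = 2 * U 1 - 2 * U (1 / 2) := by
  have hS : σS (pairProfile i j) = 2 * U (1 / 2) :=
    hσ.unique (isGreatest_welfareSet_pairProfile_of_mem hmono hconc hij (mem_univ i) (mem_univ j))
  have hm : ∀ k, σm k (pairProfile i j)
      = 2 * U (1 / 2) + if k ∈ ({i, j} : Finset ι) then U 1 - 2 * U (1 / 2) else 0 := by
    intro k
    by_cases hk : k ∈ ({i, j} : Finset ι)
    · rw [if_pos hk, add_sub_cancel]
      rcases mem_insert.mp hk with rfl | hk
      · exact (hσm k).unique (isGreatest_welfareSet_pairProfile_of_inter_eq_singleton hmono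
          (erase_inter_pair_left hij))
      · rw [mem_singleton.mp hk]
        exact (hσm j).unique (isGreatest_welfareSet_pairProfile_of_inter_eq_singleton hmono
          (pair_comm i j ▸ erase_inter_pair_left hij.symm))
    · rw [if_neg hk, add_zero]
      have hki : k ≠ i := fun h => hk (h ▸ mem_insert_self _ _)
      have hkj : k ≠ j := fun h => hk (h ▸ mem_insert_of_mem (mem_singleton_self _))
      exact (hσm k).unique (isGreatest_welfareSet_pairProfile_of_mem hmono hconc hij
        (mem_erase.mpr ⟨hki.symm, mem_univ i⟩) (mem_erase.mpr ⟨hkj.symm, mem_univ j⟩))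
  rw [sum_congr rfl fun k _ => hm k, sum_add_distrib, sum_ite_mem, univ_inter, sum_const,
    sum_const, card_pair hij, card_univ, hS, nsmul_eq_mul, nsmul_eq_mul]
  push_cast
  ring

/-- with v̄(a,θ) = θ·U(a), for every ordered θ with θ₁ = θ₂ = 1,
the Clarke surplus satisfies p_S(θ) ≥ p_S(e₂) = 2U(1) − 2U(1/2) > 0. -/
theorem pS_lower_bound {n : ℕ} (hn : 2 ≤ n) (U : ℝ → ℝ)
    (hUmono : StrictMonoOn U (Set.Icc 0 1))
    (hUconc : StrictConcaveOn ℝ (Set.Icc (0:ℝ) 1) U)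
    (σS : (Fin n → ℝ) → ℝ)
    (hσ : ∀ θ : Fin n → ℝ, (∀ i, 0 ≤ θ i) →
      IsGreatest {w | ∃ a : Fin n → ℝ, (∀ i, 0 ≤ a i) ∧ (∑ i, a i) ≤ 1 ∧
        w = ∑ i, θ i * U (a i)} (σS θ))
    (σm : Fin n → (Fin n → ℝ) → ℝ)
    (hσm : ∀ (i : Fin n) (θ : Fin n → ℝ), (∀ j, 0 ≤ θ j) →
      IsGreatest {w | ∃ a : Fin n → ℝ, (∀ j, 0 ≤ a j) ∧ (∑ j, a j) ≤ 1 ∧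
        w = ∑ j ∈ Finset.univ.erase i, θ j * U (a j)} (σm i θ))
    (pS : (Fin n → ℝ) → ℝ)
    (hpS : ∀ θ, pS θ = ∑ i, σm i θ - ((n : ℝ) - 1) * σS θ)
    (hpSmono : ∀ θ θ' : Fin n → ℝ, (∀ i, 0 ≤ θ i) → (∀ i, θ i ≤ θ' i) → pS θ ≤ pS θ') :
    (pS (fun i => if (i : ℕ) < 2 then 1 else 0) = 2 * U 1 - 2 * U (1/2) ∧
      0 < pS (fun i => if (i : ℕ) < 2 then 1 else 0)) ∧
    ∀ θ : Fin n → ℝ, (∀ i, 0 ≤ θ i) → (∀ i j : Fin n, i ≤ j → θ j ≤ θ i) →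
      θ ⟨0, by omega⟩ = 1 → θ ⟨1, by omega⟩ = 1 →
      pS (fun i => if (i : ℕ) < 2 then 1 else 0) ≤ pS θ := by
  set i0 : Fin n := ⟨0, by omega⟩
  set i1 : Fin n := ⟨1, by omega⟩
  have he : (fun i : Fin n => if (i : ℕ) < 2 then (1 : ℝ) else 0) = pairProfile i0 i1 := by
    funext k
    simp only [pairProfile, mem_insert, mem_singleton, Fin.ext_iff, i0, i1]
    split_ifs <;> first | rfl | omega
  have hval : pS (pairProfile i0 i1) = 2 * U 1 - 2 * U (1 / 2) := by
    have := clarkeSurplus_pairProfile hUmono.monotoneOn hUconc.concaveOn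
      (by simp [i0, i1, Fin.ext_iff] : i0 ≠ i1) (hσ _ (pairProfile_nonneg i0 i1))
      (fun k => hσm k _ (pairProfile_nonneg i0 i1))
    rwa [Fintype.card_fin, ← hpS] at this
  have hhalf : U (1 / 2) < U 1 := hUmono (by norm_num) (by norm_num) (by norm_num)
  rw [he]
  refine ⟨⟨hval, by linarith⟩, fun θ hθ _ h0 h1 => ?_⟩
  exact hpSmono _ _ (pairProfile_nonneg i0 i1) (pairProfile_le hθ h0.ge h1.ge)
end

section
/- With v̄(a,θ) = θ·a^{1−α}, suppose all agents' true valuations have a common derivative value v'(1/n) at the equal-split allocation. Then the symmetric Nash equilibrium bid is μ_NE = v'(1/n)/((1−α)·n^α) for each agent, the equilibrium Clarke surplus is p_S(μ_NE·eₙ) = μ_NE·n^α·(n(1−1/n)^α − (n−1)) ≤ v'(1/n), and the equilibrium optimal welfare is σ_S(μ_NE·eₙ) = v'(1/n)/(1−α). -/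
/-!
At a constant profile `θ ≡ μ` every power sum `(∑ θᵢ^{1/α})^α` over `k` agents collapses to
`k^α μ`, so `σ_S = n^α μ` and `p_S = n (n-1)^α μ - (n-1) n^α μ`; writing `(n-1)^α = n^α (1-1/n)^α`
gives the stated form of `p_S`. The equilibrium condition fixes `V = (1-α) μ n^α`, and the bound
`p_S ≤ V` is Bernoulli's inequality `(1 - 1/n)^α ≤ 1 - α/n` for `0 ≤ α ≤ 1`.
-/

open Finset Real

lemma rpow_sum_const_rpow_inv {ι : Type*} (s : Finset ι) {c α : ℝ} (hc : 0 ≤ c) (hα : α ≠ 0) :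
    (∑ _i ∈ s, c ^ α⁻¹) ^ α = (#s : ℝ) ^ α * c := by
  rw [sum_const, nsmul_eq_mul, mul_rpow (by positivity) (by positivity), rpow_inv_rpow hc hα]

lemma sub_one_rpow_eq_rpow_mul {x : ℝ} (hx : 1 ≤ x) (α : ℝ) :
    (x - 1) ^ α = x ^ α * (1 - 1 / x) ^ α := by
  have hx0 : 0 < x := by linarith
  rw [← mul_rpow hx0.le (by rw [sub_nonneg, div_le_one hx0]; exact hx), mul_one_sub,
    mul_one_div_cancel hx0.ne']

lemma mul_one_sub_inv_rpow_sub_le {x α : ℝ} (hx : 1 ≤ x) (hα0 : 0 ≤ α) (hα1 : α ≤ 1) :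
    x * (1 - 1 / x) ^ α - (x - 1) ≤ 1 - α := by
  have hx0 : 0 < x := by linarith
  have bernoulli : (1 + -(1 / x)) ^ α ≤ 1 + α * -(1 / x) :=
    rpow_one_add_le_one_add_mul_self (by rw [neg_le_neg_iff, div_le_one hx0]; exact hx) hα0 hα1
  rw [← sub_eq_add_neg] at bernoulli
  calc x * (1 - 1 / x) ^ α - (x - 1) ≤ x * (1 + α * -(1 / x)) - (x - 1) := by gcongr
    _ = 1 - α := by field_simp; ring

/-- symmetric Nash equilibrium quantities for v̄(a,θ) = θ·a^{1−α}
when all agents have a common marginal valuation V = v'(1/n) at the equal split: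
the equilibrium bid μ = V/((1−α)n^α) satisfies the equilibrium condition,
p_S(μ·eₙ) = μ·n^α·(n(1−1/n)^α − (n−1)) ≤ V, and σ_S(μ·eₙ) = V/(1−α). -/
theorem symmetric_NE_values {n : ℕ} (hn : 2 ≤ n)
    (α V : ℝ) (hα : α ∈ Set.Ioo (0:ℝ) 1) (hV : 0 < V)
    (μ : ℝ) (hμ : μ = V / ((1 - α) * (n : ℝ) ^ α))
    (σS pS : (Fin n → ℝ) → ℝ)
    (hσS : ∀ θ, σS θ = (∑ i, θ i ^ (α⁻¹)) ^ α)
    (hpS : ∀ θ, pS θ = ∑ j, (∑ i ∈ Finset.univ.erase j, θ i ^ (α⁻¹)) ^ α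
        - ((n : ℝ) - 1) * σS θ) :
    (1 - α) * μ / ((1 / (n : ℝ)) ^ α) = V ∧
    pS (fun _ => μ) = μ * (n : ℝ) ^ α * ((n : ℝ) * (1 - 1 / (n : ℝ)) ^ α - ((n : ℝ) - 1)) ∧
    pS (fun _ => μ) ≤ V ∧
    σS (fun _ => μ) = V / (1 - α) := by
  obtain ⟨hα0, hα1⟩ := hα
  have hn1 : (1 : ℝ) ≤ n := by exact_mod_cast (by omega : 1 ≤ n)
  have hnα : 0 < (n : ℝ) ^ α := rpow_pos_of_pos (by linarith) α
  have hμ0 : 0 ≤ μ := hμ ▸ div_nonneg hV.le (mul_nonneg (by linarith) hnα.le)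
  have hV_eq : V = (1 - α) * μ * n ^ α := by
    rw [hμ]; field_simp [(by linarith : 1 - α ≠ 0)]
  have hσ : σS (fun _ => μ) = n ^ α * μ := by
    rw [hσS, rpow_sum_const_rpow_inv _ hμ0 hα0.ne', card_univ, Fintype.card_fin]
  have herase (j : Fin n) : (∑ _i ∈ univ.erase j, μ ^ α⁻¹) ^ α = n ^ α * (1 - 1 / n) ^ α * μ := by
    rw [rpow_sum_const_rpow_inv _ hμ0 hα0.ne', card_erase_of_mem (mem_univ _), card_univ,
      Fintype.card_fin, Nat.cast_pred (by omega), sub_one_rpow_eq_rpow_mul hn1]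
  have hp : pS (fun _ => μ) = μ * n ^ α * (n * (1 - 1 / n) ^ α - (n - 1)) := by
    rw [hpS, hσ, sum_congr rfl fun j _ => herase j, sum_const, card_univ, Fintype.card_fin,
      nsmul_eq_mul]
    ring
  refine ⟨?_, hp, ?_, ?_⟩
  · rw [hV_eq, one_div, inv_rpow (by linarith)]
    field_simp
  · calc pS (fun _ => μ) ≤ μ * n ^ α * (1 - α) :=
          hp ▸ mul_le_mul_of_nonneg_left (mul_one_sub_inv_rpow_sub_le hn1 hα0.le hα1.le)
            (by positivity)
      _ = V := by rw [hV_eq]; ring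
  · rw [hσ, hV_eq]
    field_simp [(by linarith : 1 - α ≠ 0)]
end

section
/- If c₀ = c₁ = 0 and the partial sums Σ_{i=2}^{k} cᵢ ≥ 0 for k = 2,…,n−1, then the voluntary participation constraint rᵢ(θ_{−i}) ≥ qᵢ(θ) holds at every Nash equilibrium θ: indeed at any Nash equilibrium qᵢ(θ) ≤ 0 for all i, while rᵢ(θ_{−i}) ≥ 0. -/
lemma abel_key (c g : ℕ → ℝ) : ∀ m : ℕ,
    (∀ k, 2 ≤ k → k ≤ m → 0 ≤ ∑ j ∈ Finset.Icc 2 k, c j) →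
    (∀ k, 2 ≤ k → k + 1 ≤ m → g (k + 1) ≤ g k) →
    (∑ j ∈ Finset.Icc 2 m, c j) * g m ≤ ∑ j ∈ Finset.Icc 2 m, c j * g j := by
  intro m
  induction m with
  | zero => intro _ _; simp
  | succ m ih =>
    intro hS hmono
    rcases Nat.lt_or_ge m 1 with h1 | h1
    · interval_cases m
      simp [show Finset.Icc 2 1 = (∅ : Finset ℕ) by decide]
    · have h2 : 2 ≤ m + 1 := by omega
      rw [Finset.sum_Icc_succ_top h2, Finset.sum_Icc_succ_top h2]
      have ihm := ih (fun k hk hkm => hS k hk (by omega))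
        (fun k hk hkm => hmono k hk (by omega))
      have hgstep : (∑ j ∈ Finset.Icc 2 m, c j) * g (m + 1)
          ≤ (∑ j ∈ Finset.Icc 2 m, c j) * g m := by
        rcases Nat.lt_or_ge m 2 with hm2 | hm2
        · have he : Finset.Icc 2 m = (∅ : Finset ℕ) := by
            rw [Finset.Icc_eq_empty]; omega
          simp [he]
        · exact mul_le_mul_of_nonneg_left (hmono m hm2 le_rfl) (hS m hm2 (by omega))
      rw [add_mul]
      linarith

lemma abel_nonneg (c g : ℕ → ℝ) (m : ℕ)
    (hS : ∀ k, 2 ≤ k → k ≤ m → 0 ≤ ∑ j ∈ Finset.Icc 2 k, c j)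
    (hg : ∀ k, 2 ≤ k → k ≤ m → 0 ≤ g k)
    (hmono : ∀ k, 2 ≤ k → k + 1 ≤ m → g (k + 1) ≤ g k) :
    0 ≤ ∑ j ∈ Finset.Icc 2 m, c j * g j := by
  rcases Nat.lt_or_ge m 2 with hm | hm
  · have he : Finset.Icc 2 m = (∅ : Finset ℕ) := by rw [Finset.Icc_eq_empty]; omega
    simp [he]
  · exact le_trans (mul_nonneg (hS m hm le_rfl) (hg m hm le_rfl))
      (abel_key c g m hS hmono)

/-- with c₀ = c₁ = 0 and nonnegative partial sums of the rebate
coefficients, voluntary participation holds at every Nash equilibrium θ: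
qᵢ(θ) ≤ 0 and rᵢ(θ_{−i}) ≥ 0, hence rᵢ(θ_{−i}) ≥ qᵢ(θ). Agents are indexed 1,…,n. -/
theorem VP_at_Nash_equilibrium {n : ℕ} (hn : 3 ≤ n) (U : ℝ → ℝ)
    (hU0 : U 0 = 0) (hUmono : StrictMonoOn U (Set.Icc 0 1))
    (v : ℕ → ℝ → ℝ) (hv0 : ∀ i, v i 0 = 0)
    (astar : (ℕ → ℝ) → ℕ → ℝ)
    (astarm : ℕ → (ℕ → ℝ) → ℕ → ℝ)
    (hastar : ∀ θ : ℕ → ℝ,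
      IsGreatest {w | ∃ a : ℕ → ℝ, (∀ j ∈ Finset.Icc 1 n, 0 ≤ a j) ∧
          (∑ j ∈ Finset.Icc 1 n, a j) ≤ 1 ∧ w = ∑ j ∈ Finset.Icc 1 n, θ j * U (a j)}
        (∑ j ∈ Finset.Icc 1 n, θ j * U (astar θ j)))
    (hastarm : ∀ i ∈ Finset.Icc 1 n, ∀ θ : ℕ → ℝ,
      IsGreatest {w | ∃ a : ℕ → ℝ, (∀ j ∈ (Finset.Icc 1 n).erase i, 0 ≤ a j) ∧
          (∑ j ∈ (Finset.Icc 1 n).erase i, a j) ≤ 1 ∧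
          w = ∑ j ∈ (Finset.Icc 1 n).erase i, θ j * U (a j)}
        (∑ j ∈ (Finset.Icc 1 n).erase i, θ j * U (astarm i θ j)))
    (hastarmInd : ∀ i θ θ', (∀ j, j ≠ i → θ j = θ' j) → astarm i θ = astarm i θ')
    (pay : ℕ → (ℕ → ℝ) → ℝ)
    (hpay : ∀ i θ, pay i θ = -(∑ j ∈ (Finset.Icc 1 n).erase i, θ j * U (astar θ j))
        + ∑ j ∈ (Finset.Icc 1 n).erase i, θ j * U (astarm i θ j))
    (q : ℕ → (ℕ → ℝ) → ℝ)
    (hq : ∀ i θ, q i θ = -(v i (astar θ i))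
        - (∑ j ∈ (Finset.Icc 1 n).erase i, θ j * U (astar θ j))
        + ∑ j ∈ (Finset.Icc 1 n).erase i, θ j * U (astarm i θ j))
    (c : ℕ → ℝ) (hc0 : c 0 = 0) (hc1 : c 1 = 0)
    (hcsum : ∀ k ∈ Finset.Icc 2 (n - 1), 0 ≤ ∑ i ∈ Finset.Icc 2 k, c i)
    (r : ℕ → (ℕ → ℝ) → ℝ)
    (hr : ∀ i θ, r i θ = (∑ j ∈ Finset.Icc 2 (i - 1), c j * θ j)
        + ∑ j ∈ Finset.Icc i (n - 1), c j * θ (j + 1))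
    (θ : ℕ → ℝ)
    (hθnn : ∀ j ∈ Finset.Icc 1 n, 0 ≤ θ j)
    (hθsorted : ∀ k ∈ Finset.Icc 1 (n - 1), θ (k + 1) ≤ θ k)
    -- θ is a Nash equilibrium: no agent gains by deviating to any nonnegative bid
    (hNE : ∀ i ∈ Finset.Icc 1 n, ∀ t : ℝ, 0 ≤ t →
      v i (astar (Function.update θ i t) i) - pay i (Function.update θ i t)
        ≤ v i (astar θ i) - pay i θ)
    -- bidding 0 yields zero allocation and leaves the others as if agent i were absent
    (hzero : ∀ i ∈ Finset.Icc 1 n, astar (Function.update θ i 0) i = 0 ∧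
      ∀ j, j ≠ i → astar (Function.update θ i 0) j = astarm i θ j) :
    ∀ i ∈ Finset.Icc 1 n, q i θ ≤ 0 ∧ 0 ≤ r i θ ∧ q i θ ≤ r i θ := by
  intro i hi
  rw [Finset.mem_Icc] at hi
  obtain ⟨hi1, hin⟩ := hi
  have hiI : i ∈ Finset.Icc 1 n := Finset.mem_Icc.2 ⟨hi1, hin⟩
  -- Part 1: q i θ ≤ 0
  have hqle : q i θ ≤ 0 := by
    set θ0 := Function.update θ i 0 with hθ0
    obtain ⟨hz1, hz2⟩ := hzero i hiI
    have hInd : astarm i θ0 = astarm i θ :=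
      hastarmInd i θ0 θ (fun j hj => Function.update_of_ne hj 0 θ)
    have hpay0 : pay i θ0 = 0 := by
      rw [hpay]
      have hcong : ∀ j ∈ (Finset.Icc 1 n).erase i,
          θ0 j * U (astar θ0 j) = θ0 j * U (astarm i θ0 j) := by
        intro j hj
        have hji : j ≠ i := Finset.ne_of_mem_erase hj
        rw [hz2 j hji, hInd]
      rw [Finset.sum_congr rfl hcong]
      ring
    have hNE0 := hNE i hiI 0 le_rfl
    rw [← hθ0, hz1, hv0, hpay0] at hNE0
    rw [hq i θ, hpay i θ] at *
    linarith [hNE0]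
  -- Part 2: 0 ≤ r i θ
  have hrnn : 0 ≤ r i θ := by
    set x : ℕ → ℝ := fun j => if j < i then θ j else θ (j + 1) with hx
    have hrw : r i θ = ∑ j ∈ Finset.Icc 2 (n - 1), c j * x j := by
      rw [hr]
      rcases Nat.lt_or_ge i 2 with hi2 | hi2
      · -- i = 1
        have hieq : i = 1 := by omega
        subst hieq
        have he : Finset.Icc 2 (0 : ℕ) = (∅ : Finset ℕ) := by decide
        have hins : Finset.Icc 1 (n - 1) = insert 1 (Finset.Icc 2 (n - 1)) := by
          ext j; simp only [Finset.mem_Icc, Finset.mem_insert]; omega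
        rw [he, hins, Finset.sum_insert (by simp), hc1]
        simp only [Finset.sum_empty, zero_mul, zero_add]
        refine Finset.sum_congr rfl (fun j hj => ?_)
        rw [Finset.mem_Icc] at hj
        have : ¬ j < 1 := by omega
        simp only [hx]
        rw [if_neg this]
      · -- i ≥ 2
        have hun : Finset.Icc 2 (i - 1) ∪ Finset.Icc i (n - 1) = Finset.Icc 2 (n - 1) := by
          ext j; simp only [Finset.mem_Icc, Finset.mem_union]; omega
        have hdisj : Disjoint (Finset.Icc 2 (i - 1)) (Finset.Icc i (n - 1)) := by
          rw [Finset.disjoint_left]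
          intro j hj hj'
          rw [Finset.mem_Icc] at hj hj'
          omega
        rw [← hun, Finset.sum_union hdisj]
        congr 1
        · refine Finset.sum_congr rfl (fun j hj => ?_)
          rw [Finset.mem_Icc] at hj
          have : j < i := by omega
          simp only [hx]
          rw [if_pos this]
        · refine Finset.sum_congr rfl (fun j hj => ?_)
          rw [Finset.mem_Icc] at hj
          have : ¬ j < i := by omega
          simp only [hx]
          rw [if_neg this]
    rw [hrw]
    apply abel_nonneg
    · intro k hk2 hkm
      exact hcsum k (Finset.mem_Icc.2 ⟨hk2, hkm⟩)
    · intro k hk2 hkm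
      by_cases hki : k < i
      · simp only [hx]; rw [if_pos hki]
        exact hθnn k (Finset.mem_Icc.2 ⟨by omega, by omega⟩)
      · simp only [hx]; rw [if_neg hki]
        exact hθnn (k + 1) (Finset.mem_Icc.2 ⟨by omega, by omega⟩)
    · intro k hk2 hkm
      have hsort : ∀ l, 1 ≤ l → l ≤ n - 1 → θ (l + 1) ≤ θ l := fun l h1 h2 =>
        hθsorted l (Finset.mem_Icc.2 ⟨h1, h2⟩)
      by_cases hki : k + 1 < i
      · have h1 : k < i := by omega
        simp only [hx, if_pos h1, if_pos hki]
        exact hsort k (by omega) (by omega)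
      · by_cases hki' : k < i
        · -- i = k + 1
          simp only [hx, if_pos hki', if_neg hki]
          exact le_trans (hsort (k + 1) (by omega) (by omega)) (hsort k (by omega) (by omega))
        · have h2 : ¬ k + 1 < i := by omega
          simp only [hx, if_neg hki', if_neg h2]
          exact hsort (k + 1) (by omega) (by omega)
  exact ⟨hqle, hrnn, le_trans hqle hrnn⟩
end
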